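/- Let μ be a probability measure on ℝ^d, r > 0 and s > 0. Then the map z ↦ SD^r_s(z|μ) is Lipschitz on ℝ^d: there is a finite constant L' (depending only on r and s) such that |SD^r_s(z|μ) − SD^r_s(z'|μ)| ≤ L'·‖z − z'‖ for all z, z' ∈ ℝ^d. -/

import Mathlib

open MeasureTheory

/-- The sigmoid function with scale `s`. -/
noncomputable def sig (s t : ℝ) : ℝ := 1 / (1 + Real.exp (-t / s))

/-- The (smoothed, `s > 0`) sphere depth
`SD^r_s(z|μ) = inf_{‖c−z‖=r} ∫ sig_s(r² − ‖x − c‖²) dμ(x)`. -/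
noncomputable def SDs (d : ℕ) (r s : ℝ) (z : EuclideanSpace ℝ (Fin d))
    (μ : Measure (EuclideanSpace ℝ (Fin d))) : ℝ :=
  ⨅ c : Metric.sphere z r, ∫ x, sig s (r ^ 2 - ‖x - (c : EuclideanSpace ℝ (Fin d))‖ ^ 2) ∂μ

/-!
Substituting `c = z + v` turns `SD^r_s(z|μ)` into an infimum over the fixed sphere `‖v‖ = r` of
`F (z + v)`, where `F c = ∫ sig_s(r² − ‖x − c‖²) dμ(x)`; an infimum of uniformly `K`-Lipschitz,
uniformly bounded below functions is `K`-Lipschitz. `F` is `K`-Lipschitz because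
`u ↦ sig_s(r² − u²)` is: its derivative is bounded by `sig_s(r² − u²) · 2|u|/s`, and
`sig_s(t) ≤ exp(t/s)` leaves `2 exp(r²/s) · |u| exp(−u²/s) / s ≤ 2 exp(r²/s) / √s`.
-/

open Real Metric Set
open scoped NNReal

lemma Real.sigmoid_le_exp (x : ℝ) : sigmoid x ≤ exp x :=
  calc sigmoid x = (1 + exp (-x))⁻¹ := sigmoid_def x
    _ ≤ (exp (-x))⁻¹ := inv_anti₀ (exp_pos _) (le_add_of_nonneg_left zero_le_one)
    _ = exp x := by rw [exp_neg, inv_inv]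

lemma sig_eq_sigmoid (s t : ℝ) : sig s t = sigmoid (t / s) := by
  rw [sig, sigmoid_def, one_div, neg_div]

lemma sig_nonneg (s t : ℝ) : 0 ≤ sig s t :=
  sig_eq_sigmoid s t ▸ sigmoid_nonneg _

lemma sig_le_one (s t : ℝ) : sig s t ≤ 1 :=
  sig_eq_sigmoid s t ▸ sigmoid_le_one _

lemma hasDerivAt_sig_sub_sq (r s u : ℝ) :
    HasDerivAt (fun u => sig s (r ^ 2 - u ^ 2))
      (sigmoid ((r ^ 2 - u ^ 2) / s) * (1 - sigmoid ((r ^ 2 - u ^ 2) / s)) * (-(2 * u) / s)) u := by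
  simp_rw [sig_eq_sigmoid]
  have hinner : HasDerivAt (fun u : ℝ => (r ^ 2 - u ^ 2) / s) (-(2 * u) / s) u := by
    simpa using ((hasDerivAt_pow 2 u).const_sub (r ^ 2)).div_const s
  exact (hasDerivAt_sigmoid _).comp u hinner

lemma abs_deriv_sig_sub_sq_le {r s : ℝ} (hs : 0 < s) (u : ℝ) :
    |sigmoid ((r ^ 2 - u ^ 2) / s) * (1 - sigmoid ((r ^ 2 - u ^ 2) / s)) * (-(2 * u) / s)|
      ≤ 2 * exp (r ^ 2 / s) / √s := by
  set y := (r ^ 2 - u ^ 2) / s with hy_def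
  have hσ : sigmoid y * (1 - sigmoid y) ≤ exp y := by
    nlinarith [sigmoid_le_exp y, sigmoid_pos y, sigmoid_lt_one y]
  -- `|u| exp (-u²/s)` is bounded by `√s`, the maximum of `mulExpNegMulSq s⁻¹`.
  have hu : |u| * exp (-(u ^ 2 / s)) ≤ √s := by
    have := abs_mulExpNegMulSq_le (inv_pos.2 hs) (x := u)
    rw [mulExpNegSq_apply, Real.sqrt_inv, inv_inv, abs_mul, abs_exp] at this
    convert this using 4
    ring
  have hy : exp y = exp (r ^ 2 / s) * exp (-(u ^ 2 / s)) := by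
    rw [← exp_add, hy_def]; ring_nf
  rw [abs_mul, abs_of_nonneg (mul_nonneg (sigmoid_nonneg y) (by linarith [sigmoid_lt_one y])),
    abs_div, abs_neg, abs_mul, abs_two, abs_of_pos hs]
  calc sigmoid y * (1 - sigmoid y) * (2 * |u| / s)
      ≤ exp y * (2 * |u| / s) := by gcongr
    _ = 2 * exp (r ^ 2 / s) * (|u| * exp (-(u ^ 2 / s))) / s := by rw [hy]; ring
    _ ≤ 2 * exp (r ^ 2 / s) * √s / s := by gcongr
    _ = 2 * exp (r ^ 2 / s) / √s := by
      rw [mul_div_assoc, sqrt_div_self', mul_one_div]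

lemma lipschitzWith_sig_sub_sq {s : ℝ} (hs : 0 < s) (r : ℝ) :
    LipschitzWith (2 * exp (r ^ 2 / s) / √s).toNNReal fun u : ℝ => sig s (r ^ 2 - u ^ 2) :=
  lipschitzWith_of_nnnorm_deriv_le (fun u => (hasDerivAt_sig_sub_sq r s u).differentiableAt)
    fun u => by
      rw [(hasDerivAt_sig_sub_sq r s u).deriv, ← NNReal.coe_le_coe, coe_nnnorm,
        coe_toNNReal _ (by positivity)]
      exact abs_deriv_sig_sub_sq_le hs u

lemma lipschitzWith_sig_sub_norm_sq {E : Type*} [SeminormedAddCommGroup E] {s : ℝ} (hs : 0 < s)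
    (r : ℝ) (x : E) :
    LipschitzWith (2 * exp (r ^ 2 / s) / √s).toNNReal fun c => sig s (r ^ 2 - ‖x - c‖ ^ 2) := by
  simpa [Function.comp_def] using (lipschitzWith_sig_sub_sq hs r).comp
    (lipschitzWith_one_norm.comp (IsometryEquiv.subLeft x).isometry.lipschitz)

lemma LipschitzWith.ciInf {X ι : Type*} [PseudoMetricSpace X] {K : ℝ≥0} {f : ι → X → ℝ}
    (hf : ∀ i, LipschitzWith K (f i)) (hb : ∀ x, BddBelow (range fun i => f i x)) :
    LipschitzWith K fun x => ⨅ i, f i x := by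
  cases isEmpty_or_nonempty ι
  · simpa only [Real.iInf_of_isEmpty] using LipschitzWith.const' (0 : ℝ)
  refine .of_le_add_mul K fun x y => ?_
  rw [← sub_le_iff_le_add]
  exact le_ciInf fun i => sub_le_iff_le_add.2 <| (ciInf_le (hb x) i).trans ((hf i).le_add_mul x y)

lemma LipschitzWith.iInf_sphere {E : Type*} [SeminormedAddCommGroup E] {K : ℝ≥0} {F : E → ℝ}
    (hF : LipschitzWith K F) (hb : BddBelow (range F)) (r : ℝ) :
    LipschitzWith K fun z : E => ⨅ c : sphere z r, F (c : E) := by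
  have htranslate (z : E) :
      ⨅ c : sphere z r, F (c : E) = ⨅ v : sphere (0 : E) r, F (z + (v : E)) :=
    ((Equiv.addLeft z).subtypeEquiv fun v => by simp [mem_sphere_iff_norm]).iInf_comp.symm
  simp_rw [htranslate]
  exact .ciInf
    (fun v => by simpa [Function.comp_def] using hF.comp (isometry_add_right (v : E)).lipschitz)
    fun z => hb.mono (range_comp_subset_range _ F)

lemma lipschitzWith_integral_of_forall_lipschitzWith {α X E : Type*} [MeasurableSpace α]
    [PseudoMetricSpace X] [NormedAddCommGroup E] [NormedSpace ℝ E] {μ : Measure α}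
    [IsProbabilityMeasure μ] {K : ℝ≥0} {g : α → X → E} (hg : ∀ x, LipschitzWith K (g x))
    (hint : ∀ c, Integrable (fun x => g x c) μ) :
    LipschitzWith K fun c => ∫ x, g x c ∂μ := by
  refine .of_dist_le_mul fun c c' => ?_
  rw [dist_eq_norm, ← integral_sub (hint c) (hint c')]
  simpa using norm_integral_le_of_norm_le_const (μ := μ)
    (ae_of_all _ fun x => (dist_eq_norm (g x c) (g x c')) ▸ (hg x).dist_le_mul c c')

lemma integrable_sig_sub_norm_sq {E : Type*} [SeminormedAddCommGroup E] [MeasurableSpace E]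
    [OpensMeasurableSpace E] {μ : Measure E} [IsFiniteMeasure μ] (r s : ℝ) (c : E) :
    Integrable (fun x => sig s (r ^ 2 - ‖x - c‖ ^ 2)) μ := by
  refine Integrable.of_bound (C := 1) ?_ (ae_of_all _ fun x => ?_)
  · simp_rw [sig_eq_sigmoid]
    exact (continuous_sigmoid.comp (by fun_prop)).aestronglyMeasurable
  · rw [norm_of_nonneg (sig_nonneg _ _)]
    exact sig_le_one _ _

theorem stmt_13_general (d : ℕ) (r s : ℝ) (hs : 0 < s) :
    ∃ L : ℝ, ∀ (μ : Measure (EuclideanSpace ℝ (Fin d))), IsProbabilityMeasure μ →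
      ∀ z z' : EuclideanSpace ℝ (Fin d),
        |SDs d r s z μ - SDs d r s z' μ| ≤ L * ‖z - z'‖ := by
  refine ⟨2 * exp (r ^ 2 / s) / √s, fun μ _ z z' => ?_⟩
  set F := fun c : EuclideanSpace ℝ (Fin d) => ∫ x, sig s (r ^ 2 - ‖x - c‖ ^ 2) ∂μ
  have hF : LipschitzWith (2 * exp (r ^ 2 / s) / √s).toNNReal F :=
    lipschitzWith_integral_of_forall_lipschitzWith (lipschitzWith_sig_sub_norm_sq hs r)
      (integrable_sig_sub_norm_sq r s)
  have hb : BddBelow (range F) :=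
    ⟨0, forall_mem_range.2 fun c => integral_nonneg fun x => sig_nonneg _ _⟩
  have := (hF.iInf_sphere hb r).dist_le_mul z z'
  rw [coe_toNNReal _ (by positivity), Real.dist_eq, dist_eq_norm] at this
  exact this

/-- The map `z ↦ SD^r_s(z|μ)` is Lipschitz, with constant depending only on `r` and `s`. -/
theorem stmt_13 (d : ℕ) (r s : ℝ) (hr : 0 < r) (hs : 0 < s) :
    ∃ L : ℝ, ∀ (μ : Measure (EuclideanSpace ℝ (Fin d))), IsProbabilityMeasure μ →
      ∀ z z' : EuclideanSpace ℝ (Fin d),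
        |SDs d r s z μ - SDs d r s z' μ| ≤ L * ‖z - z'‖ :=
  stmt_13_general d r s hs
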